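/- arXiv:0809.1901 — 2 statements merged into one kernel-verified Lean document; each statement's English description precedes it below -/
import Mathlib

section
/- Let T : X → Y be a bounded linear operator between Hilbert spaces. Then T is compact if and only if for every ε > 0 there exist a compact operator K_ε : X → Y and a constant C_ε > 0 such that ‖T h‖ ≤ ε‖h‖ + C_ε‖K_ε h‖ for all h ∈ X. -/
/-!
If `‖T h‖ ≤ ε ‖h‖ + C ‖K h‖`, then on the unit ball `T` moves points whose `K`-images are
`ε / C`-close by less than `3 ε`, so a finite net of the totally bounded set `K (ball)` pulls back
to a finite `3 ε`-net of `T (ball)`; completeness of the target turns total boundedness into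
compactness.
-/

open Metric Set

theorem totallyBounded_image_of_controlled {α β γ : Type*} [PseudoMetricSpace β]
    [PseudoMetricSpace γ] {f : α → β} {s : Set α}
    (h : ∀ ε > 0, ∃ (g : α → γ) (δ : ℝ), 0 < δ ∧ TotallyBounded (g '' s) ∧
      ∀ a ∈ s, ∀ b ∈ s, dist (g a) (g b) < δ → dist (f a) (f b) < ε) :
    TotallyBounded (f '' s) := by
  refine totallyBounded_iff.2 fun ε hε => ?_
  obtain ⟨g, δ, hδ, hg, hfg⟩ := h ε hε
  obtain ⟨t, hts, htf, hcover⟩ := finite_approx_of_totallyBounded hg δ hδ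
  obtain ⟨u, hus, huf, rfl⟩ := htf.exists_subset_finite_image_eq hts
  refine ⟨f '' u, huf.image f, ?_⟩
  rintro _ ⟨x, hx, rfl⟩
  obtain ⟨_, ⟨z, hz, rfl⟩, hxz⟩ := mem_iUnion₂.1 (hcover (mem_image_of_mem g hx))
  exact mem_iUnion₂.2 ⟨f z, mem_image_of_mem f hz, hfg x hx z (hus hz) hxz⟩

theorem isCompactOperator_of_forall_norm_le_add {𝕜 E F G : Type*} [NontriviallyNormedField 𝕜]
    [SeminormedAddCommGroup E] [NormedSpace 𝕜 E] [NormedAddCommGroup F] [NormedSpace 𝕜 F]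
    [CompleteSpace F] [NormedAddCommGroup G] [NormedSpace 𝕜 G] (T : E →ₗ[𝕜] F)
    (h : ∀ ε > 0, ∃ (K : E →ₗ[𝕜] G) (C : ℝ), IsCompactOperator K ∧ 0 < C ∧
      ∀ x, ‖T x‖ ≤ ε * ‖x‖ + C * ‖K x‖) :
    IsCompactOperator T := by
  rw [isCompactOperator_iff_isCompact_closure_image_closedBall T one_pos]
  refine TotallyBounded.isCompact_of_isClosed ?_ isClosed_closure
  refine (totallyBounded_image_of_controlled (γ := G) fun ε hε => ?_).closure
  obtain ⟨K, C, hK, hC, hTK⟩ := h (ε / 3) (by positivity)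
  refine ⟨K, ε / (3 * C), by positivity,
    (hK.isCompact_closure_image_closedBall 1).totallyBounded.subset subset_closure,
    fun a ha b hb hab => ?_⟩
  rw [mem_closedBall_zero_iff] at ha hb
  rw [dist_eq_norm, ← map_sub] at hab ⊢
  calc ‖T (a - b)‖ ≤ ε / 3 * ‖a - b‖ + C * ‖K (a - b)‖ := hTK _
    _ < ε / 3 * 2 + C * (ε / (3 * C)) := by
      have hab_le : ‖a - b‖ ≤ 2 := by linarith [norm_sub_le_of_le ha hb]
      exact add_lt_add_of_le_of_lt (by gcongr) (by gcongr)
    _ = ε := by field_simp; ring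

theorem compact_iff_compactness_estimate_general
    {X Y : Type*} [NormedAddCommGroup X] [InnerProductSpace ℂ X]
    [NormedAddCommGroup Y] [InnerProductSpace ℂ Y] [CompleteSpace Y]
    (T : X →L[ℂ] Y) :
    IsCompactOperator T ↔
      ∀ ε : ℝ, 0 < ε →
        ∃ (K : X →L[ℂ] Y) (C : ℝ), IsCompactOperator K ∧ 0 < C ∧
          ∀ h : X, ‖T h‖ ≤ ε * ‖h‖ + C * ‖K h‖ := by
  refine ⟨fun hT ε hε => ⟨T, 1, hT, one_pos, fun h => ?_⟩, fun H => ?_⟩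
  · rw [one_mul]
    exact le_add_of_nonneg_left (by positivity)
  · refine isCompactOperator_of_forall_norm_le_add (G := Y) (T : X →ₗ[ℂ] Y) fun ε hε => ?_
    obtain ⟨K, C, hK, hC, hTK⟩ := H ε hε
    exact ⟨K, C, hK, hC, hTK⟩

/-- A bounded linear operator `T` between complex Hilbert spaces is compact if and only if
for every `ε > 0` there exist a compact operator `K` and a constant `C > 0` with
`‖T h‖ ≤ ε ‖h‖ + C ‖K h‖` for all `h`. -/
theorem compact_iff_compactness_estimate
    {X Y : Type*} [NormedAddCommGroup X] [InnerProductSpace ℂ X] [CompleteSpace X]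
    [NormedAddCommGroup Y] [InnerProductSpace ℂ Y] [CompleteSpace Y]
    (T : X →L[ℂ] Y) :
    IsCompactOperator T ↔
      ∀ ε : ℝ, 0 < ε →
        ∃ (K : X →L[ℂ] Y) (C : ℝ), IsCompactOperator K ∧ 0 < C ∧
          ∀ h : X, ‖T h‖ ≤ ε * ‖h‖ + C * ‖K h‖ :=
  compact_iff_compactness_estimate_general T
end

section
/- Let Ω be a convex domain in ℂⁿ and f : Δ → ∂Ω a non-constant holomorphic map from the open unit disc into the boundary of Ω. Then the convex hull of f(Δ) is contained in ∂Ω. -/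
/-!
A point `p = ∑ wᵢ f(ζᵢ)` of the convex hull is the value at `ζ` of the holomorphic map
`G(ξ) = ∑ wᵢ f(ξᵢ)` on the polydisc, which takes values in the convex set `closure Ω`. If a
holomorphic map into `closure Ω` hits the open convex set `Ω` once, it stays in `Ω`: otherwise
the real part of a functional separating a boundary value from `Ω` would attain an interior
maximum, so it would be constant. Since `G(0) = f(0) ∉ Ω`, `p ∉ Ω`.
-/

open Set Metric

section MaximumPrinciple

variable {E F : Type*} [NormedAddCommGroup E] [NormedSpace ℂ E]
  [NormedAddCommGroup F] [NormedSpace ℂ F]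

/-- `‖exp ∘ g‖ = exp ∘ re ∘ g`, so this is the maximum modulus principle for `exp ∘ g`. -/
theorem Complex.eqOn_re_of_isPreconnected_of_isMaxOn_re {g : E → ℂ} {U : Set E} {c : E}
    (hU : IsPreconnected U) (hUo : IsOpen U) (hg : DifferentiableOn ℂ g U) (hc : c ∈ U)
    (hmax : IsMaxOn (fun z => (g z).re) U c) :
    EqOn (fun z => (g z).re) (Function.const E (g c).re) U := by
  have hexp : IsMaxOn (norm ∘ Complex.exp ∘ g) U c := fun z hz => by
    simpa only [Function.comp_apply, Complex.norm_exp, Real.exp_le_exp]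
      using hmax hz
  intro z hz
  have := Complex.norm_eqOn_of_isPreconnected_of_isMaxOn hU hUo
    (Complex.differentiable_exp.comp_differentiableOn hg) hc hexp hz
  simpa only [Function.comp_apply, Function.const_apply, Complex.norm_exp,
    Real.exp_eq_exp] using this

theorem DifferentiableOn.mapsTo_of_mapsTo_closure {Ω : Set F} (hΩo : IsOpen Ω)
    (hΩc : Convex ℝ Ω) {U : Set E} (hU : IsPreconnected U) (hUo : IsOpen U) {g : E → F}
    (hg : DifferentiableOn ℂ g U) (hcl : MapsTo g U (closure Ω)) {a : E} (ha : a ∈ U)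
    (hga : g a ∈ Ω) : MapsTo g U Ω := by
  intro b hb
  by_contra hgb
  obtain ⟨L, hL⟩ := RCLike.geometric_hahn_banach_open_point (𝕜 := ℂ) hΩc hΩo hgb
  have hle : closure Ω ⊆ {y | (L y).re ≤ (L (g b)).re} :=
    closure_minimal (fun y hy => (hL y hy).le)
      (isClosed_le (Complex.continuous_re.comp L.continuous) continuous_const)
  have hmax : IsMaxOn (fun z => (L (g z)).re) U b := fun z hz => hle (hcl hz)
  have heq := Complex.eqOn_re_of_isPreconnected_of_isMaxOn_re hU hUo
    (L.differentiable.comp_differentiableOn hg) hb hmax ha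
  exact (hL _ hga).ne heq

end MaximumPrinciple

theorem convexHull_image_subset_frontier_general
    {n : ℕ} (Ω : Set (Fin n → ℂ)) (hΩopen : IsOpen Ω)
    (hΩconv : Convex ℝ Ω)
    (f : ℂ → (Fin n → ℂ)) (hf : DifferentiableOn ℂ f (Metric.ball 0 1))
    (hbd : ∀ z ∈ Metric.ball (0 : ℂ) 1, f z ∈ frontier Ω) :
    convexHull ℝ (f '' Metric.ball (0 : ℂ) 1) ⊆ frontier Ω := by
  intro p hp
  obtain ⟨ι, _, w, z, hw₀, hw₁, hz, rfl⟩ := mem_convexHull_iff_exists_fintype.1 hp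
  choose ζ hζ hfζ using hz
  set D := univ.pi fun _ : ι => ball (0 : ℂ) 1
  set G : (ι → ℂ) → Fin n → ℂ := fun ξ => ∑ i, w i • f (ξ i)
  have hGd : DifferentiableOn ℂ G D := DifferentiableOn.fun_sum fun i _ =>
    (hf.comp (differentiable_apply i).differentiableOn
      fun (ξ : ι → ℂ) (hξ : ξ ∈ D) => hξ i (mem_univ i)).const_smul (w i)
  have hGcl : MapsTo G D (closure Ω) := fun ξ hξ =>
    hΩconv.closure.sum_mem (fun i _ => hw₀ i) hw₁ fun i _ =>
      frontier_subset_closure (hbd _ (hξ i (mem_univ i)))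
  have hG0 : G 0 = f 0 := by simp only [G, Pi.zero_apply, ← Finset.sum_smul, hw₁, one_smul]
  have hGζ : G ζ = ∑ i, w i • z i := by simp only [G, hfζ]
  rw [hΩopen.frontier_eq] at hbd ⊢
  refine ⟨hGζ ▸ hGcl fun i _ => hζ i, fun hpΩ => ?_⟩
  have hD : Convex ℝ D := convex_pi fun _ _ => convex_ball 0 1
  have h0 : (0 : ι → ℂ) ∈ D := fun _ _ => mem_ball_self one_pos
  have := hGd.mapsTo_of_mapsTo_closure hΩopen hΩconv hD.isPreconnected
    (isOpen_set_pi finite_univ fun _ _ => isOpen_ball) hGcl (fun i _ => hζ i) (hGζ ▸ hpΩ) h0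
  exact (hbd 0 (mem_ball_self one_pos)).2 (hG0 ▸ this)

/-- If `Ω` is a convex domain in `ℂⁿ` and `f : Δ → ∂Ω` is a non-constant holomorphic map
from the open unit disc into the boundary of `Ω`, then the convex hull of `f(Δ)` is
contained in `∂Ω`. -/
theorem convexHull_image_subset_frontier
    {n : ℕ} (Ω : Set (Fin n → ℂ)) (hΩopen : IsOpen Ω) (hΩne : Ω.Nonempty)
    (hΩconv : Convex ℝ Ω)
    (f : ℂ → (Fin n → ℂ)) (hf : DifferentiableOn ℂ f (Metric.ball 0 1))
    (hbd : ∀ z ∈ Metric.ball (0 : ℂ) 1, f z ∈ frontier Ω)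
    (hnc : ¬ ∃ c : Fin n → ℂ, ∀ z ∈ Metric.ball (0 : ℂ) 1, f z = c) :
    convexHull ℝ (f '' Metric.ball (0 : ℂ) 1) ⊆ frontier Ω :=
  convexHull_image_subset_frontier_general Ω hΩopen hΩconv f hf hbd
end
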